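/- arXiv:1606.07711 — 2 statements merged into one kernel-verified Lean document; each statement's English description precedes it below -/
import Mathlib

section
/- Let A be a real n×n payoff matrix of a symmetric two-player game and let Δ = {x ∈ ℝⁿ : Σ_h x_h = 1, x_h ≥ 0 for all h} be the standard simplex of mixed strategies. Suppose x : [0,∞) → ℝⁿ is a trajectory of the replicator dynamics, i.e. for every t ≥ 0 and every h, the h-th coordinate satisfies x_h'(t) = x_h(t)·((A x(t))_h − x(t)ᵀ A x(t)), with x(t) ∈ Δ for all t and x(0) in the interior of Δ (all coordinates of x(0) strictly positive). If x(t) converges to a point x* as t → ∞, then x* is a (symmetric) Nash equilibrium, i.e. yᵀ A x* ≤ x*ᵀ A x* for every y ∈ Δ. -/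
/-!
If some pure strategy `h` earned strictly more than the average against the limit `x*`, then by
continuity it would eventually do so by a margin `ε > 0` along the trajectory, and the replicator
equation `ẋ_h = x_h · (excess payoff)` would make `x_h` grow like `exp (ε t / 2)`. This is
impossible on the simplex, where `x_h ≤ 1`, as soon as `x_h` is positive at some late time; and
`x_h` never vanishes because its relative growth rate is bounded below on the compact simplex.
-/

open Matrix Filter Topology Set Real

theorem dotProduct_le_of_mem_stdSimplex {𝕜 ι : Type*} [CommSemiring 𝕜] [PartialOrder 𝕜]
    [IsOrderedRing 𝕜] [Fintype ι] {y v : ι → 𝕜} {c : 𝕜} (hy : y ∈ stdSimplex 𝕜 ι)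
    (hv : ∀ i, v i ≤ c) : y ⬝ᵥ v ≤ c :=
  calc y ⬝ᵥ v = ∑ i, y i * v i := rfl
    _ ≤ ∑ i, y i * c := Finset.sum_le_sum fun i _ => mul_le_mul_of_nonneg_left (hv i) (hy.1 i)
    _ = c := by rw [← Finset.sum_mul, hy.2, one_mul]

theorem mul_exp_le_of_hasDerivAt_mul {f g : ℝ → ℝ} {a c : ℝ}
    (hf : ∀ t ≥ a, HasDerivAt f (f t * g t) t) (hf₀ : ∀ t ≥ a, 0 ≤ f t)
    (hg : ∀ t ≥ a, c ≤ g t) {t : ℝ} (ht : a ≤ t) :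
    f a * exp (c * (t - a)) ≤ f t := by
  have hmono : MonotoneOn (fun s => f s * exp (-(c * s))) (Ici a) := by
    have hderiv : ∀ s ≥ a, HasDerivAt (fun s => f s * exp (-(c * s)))
        (f s * (g s - c) * exp (-(c * s))) s := fun s hs => by
      have hexp : HasDerivAt (fun s => exp (-(c * s))) (exp (-(c * s)) * -c) s := by
        simpa using ((hasDerivAt_id s).const_mul c).neg.exp
      exact ((hf s hs).mul hexp).congr_deriv (by ring)
    refine monotoneOn_of_hasDerivWithinAt_nonneg (convex_Ici a)
      (fun s hs => (hderiv s hs).continuousAt.continuousWithinAt)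
      (fun s hs => (hderiv s (interior_subset hs)).hasDerivWithinAt) fun s hs => ?_
    have hs : a ≤ s := interior_subset hs
    exact mul_nonneg (mul_nonneg (hf₀ s hs) (sub_nonneg.2 (hg s hs))) (exp_pos _).le
  calc f a * exp (c * (t - a)) = f a * exp (-(c * a)) * exp (c * t) := by
        rw [mul_assoc, ← exp_add]; congr 2; ring
    _ ≤ f t * exp (-(c * t)) * exp (c * t) :=
        mul_le_mul_of_nonneg_right (hmono self_mem_Ici ht ht) (exp_pos _).le
    _ = f t := by rw [mul_assoc, ← exp_add, neg_add_cancel, exp_zero, mul_one]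

/-- The relative growth rate of `x_h` under the replicator dynamics. -/
def excessPayoff {ι : Type*} [Fintype ι] (A : Matrix ι ι ℝ) (h : ι) (v : ι → ℝ) : ℝ :=
  (A *ᵥ v) h - v ⬝ᵥ A *ᵥ v

theorem continuous_excessPayoff {ι : Type*} [Fintype ι] (A : Matrix ι ι ℝ) (h : ι) :
    Continuous (excessPayoff A h) := by
  unfold excessPayoff
  fun_prop

theorem excessPayoff_limit_nonpos {ι : Type*} [Fintype ι] {A : Matrix ι ι ℝ}
    {x : ℝ → ι → ℝ} {xstar : ι → ℝ} {h : ι}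
    (hODE : ∀ t ≥ (0 : ℝ), HasDerivAt (fun s => x s h) (x t h * excessPayoff A h (x t)) t)
    (hsimplex : ∀ t ≥ (0 : ℝ), x t ∈ stdSimplex ℝ ι) (hinterior : 0 < x 0 h)
    (hlim : Tendsto x atTop (𝓝 xstar)) :
    excessPayoff A h xstar ≤ 0 := by
  by_contra! hε
  set ε := excessPayoff A h xstar
  have hcont := continuous_excessPayoff A h
  obtain ⟨T, hT⟩ : ∃ T, ∀ t ≥ T, ε / 2 ≤ excessPayoff A h (x t) ∧ 0 ≤ t := eventually_atTop.1 <|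
    (((hcont.tendsto xstar).comp hlim).eventually (eventually_ge_nhds (half_lt_self hε))).and
      (eventually_ge_atTop 0)
  have hT₀ : 0 ≤ T := (hT T le_rfl).2
  have hcoord : ∀ t ≥ 0, x t h ∈ Icc 0 1 := fun t ht => mem_Icc_of_mem_stdSimplex (hsimplex t ht) h
  obtain ⟨M, hM⟩ := (isCompact_stdSimplex ℝ ι).bddBelow_image hcont.continuousOn
  have hxT : 0 < x T h := (mul_pos hinterior (exp_pos _)).trans_le <|
    mul_exp_le_of_hasDerivAt_mul hODE (fun t ht => (hcoord t ht).1)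
      (fun t ht => hM ⟨x t, hsimplex t ht, rfl⟩) hT₀
  have hgrow : ∀ t ≥ T, x T h * exp (ε / 2 * (t - T)) ≤ x t h := fun t ht =>
    mul_exp_le_of_hasDerivAt_mul (fun s hs => hODE s (hT₀.trans hs))
      (fun s hs => (hcoord s (hT₀.trans hs)).1) (fun s hs => (hT s hs).1) ht
  have hunbounded : Tendsto (fun t => x T h * exp (ε / 2 * (t - T))) atTop atTop :=
    (tendsto_exp_atTop.comp ((tendsto_atTop_add_const_right _ (-T) tendsto_id).const_mul_atTop
      (half_pos hε))).const_mul_atTop hxT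
  obtain ⟨t, ht₁, htT⟩ := ((hunbounded.eventually_gt_atTop 1).and (eventually_ge_atTop T)).exists
  linarith [hgrow t htT, (hcoord t (hT₀.trans htT)).2]

/-- If a trajectory of the replicator dynamics, staying in the standard simplex
and starting in its interior, converges as `t → ∞`, then the limit is a
(symmetric) Nash equilibrium. -/
theorem replicator_limit_is_nash
    {n : ℕ} (A : Matrix (Fin n) (Fin n) ℝ)
    (x : ℝ → Fin n → ℝ) (xstar : Fin n → ℝ)
    (hODE : ∀ t ≥ (0 : ℝ), ∀ h : Fin n,
      HasDerivAt (fun s => x s h)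
        (x t h * ((A.mulVec (x t)) h - (x t) ⬝ᵥ A.mulVec (x t))) t)
    (hsimplex : ∀ t ≥ (0 : ℝ), x t ∈ stdSimplex ℝ (Fin n))
    (hinterior : ∀ h : Fin n, 0 < x 0 h)
    (hlim : Filter.Tendsto x Filter.atTop (nhds xstar)) :
    ∀ y ∈ stdSimplex ℝ (Fin n),
      y ⬝ᵥ A.mulVec xstar ≤ xstar ⬝ᵥ A.mulVec xstar := by
  intro y hy
  exact dotProduct_le_of_mem_stdSimplex hy fun h =>
    sub_nonpos.1 <| excessPayoff_limit_nonpos (hODE · · h) hsimplex (hinterior h) hlim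
end

section
/- Let A be a real n×n payoff matrix of a symmetric two-player game and Δ the standard simplex in ℝⁿ. Suppose x* ∈ Δ is a strict Nash equilibrium, i.e. yᵀ A x* < x*ᵀ A x* for every y ∈ Δ with y ≠ x*. Then x* is asymptotically stable for the replicator dynamics ẋ_h = x_h((Ax)_h − xᵀAx) restricted to Δ: (i) for every neighborhood U of x* in Δ there is a neighborhood V of x* in Δ such that every trajectory of the replicator dynamics in Δ starting in V remains in U for all t ≥ 0, and (ii) there is a neighborhood W of x* in Δ such that every trajectory of the replicator dynamics in Δ starting in W converges to x* as t → ∞. -/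
/-!
A strict Nash equilibrium of a symmetric game is a pure strategy `eᵢ` that is a strict best
reply to itself, so `A h i < A i i` for every `h ≠ i`. On the simplex the sup-distance to `eᵢ`
is `1 - xᵢ`, and near `eᵢ` the replicator dynamics gives `d/dt (1 - xᵢ) ≤ -c (1 - xᵢ)`:
strategy `i` earns more than every other pure strategy, hence more than the population average,
by a margin proportional to the mass `1 - xᵢ` carried by the other strategies. A comparison
argument turns this into exponential decay of the distance to `eᵢ`.
-/

open Matrix Filter Set Metric Real Topology

theorem le_mul_exp_neg_mul_of_hasDerivAt {g g' : ℝ → ℝ} {c ε : ℝ} (hc : 0 < c)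
    (hg : ∀ t ≥ (0 : ℝ), HasDerivAt g (g' t) t)
    (hdrift : ∀ t ≥ (0 : ℝ), g t < ε → g' t ≤ -c * g t) (h0 : 0 ≤ g 0) (hε : g 0 < ε) :
    ∀ t ≥ (0 : ℝ), g t ≤ g 0 * exp (-c * t) := by
  intro t ht
  have hcont : ContinuousOn g (Icc 0 t) := fun s hs =>
    (hg s hs.1).continuousAt.continuousWithinAt
  have hderiv : ∀ s ∈ Ico 0 t, HasDerivWithinAt g (g' s) (Ici s) s := fun s hs =>
    (hg s hs.1).hasDerivWithinAt
  -- `{g ≤ (g 0 + ε) / 2}` is forward invariant: on its boundary `g' ≤ -c g < 0`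
  have hinv : ∀ s ∈ Icc 0 t, g s ≤ (g 0 + ε) / 2 :=
    image_le_of_deriv_right_lt_deriv_boundary' hcont hderiv (by linarith) continuousOn_const
      (fun s _ => hasDerivWithinAt_const s _ _) fun s hs hsa => by
        have := hdrift s hs.1 (by linarith)
        nlinarith
  have := le_gronwallBound_of_liminf_deriv_right_le (K := -c) (ε := 0) hcont
    (fun s hs r hr => (hderiv s hs).liminf_right_slope_le hr) le_rfl
    (fun s hs => by
      have := hdrift s hs.1 ((hinv s (Ico_subset_Icc_self hs)).trans_lt (by linarith))
      linarith) t ⟨ht, le_rfl⟩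
  simpa [gronwallBound_ε0] using this

variable {ι : Type*} [Fintype ι]

def IsStrictNash (A : Matrix ι ι ℝ) (x : ι → ℝ) : Prop :=
  x ∈ stdSimplex ℝ ι ∧ ∀ y ∈ stdSimplex ℝ ι, y ≠ x → y ⬝ᵥ A *ᵥ x < x ⬝ᵥ A *ᵥ x

def replicatorField (A : Matrix ι ι ℝ) (x : ι → ℝ) (h : ι) : ℝ :=
  x h * ((A *ᵥ x) h - x ⬝ᵥ A *ᵥ x)

variable [DecidableEq ι]

theorem IsStrictNash.exists_eq_single {A : Matrix ι ι ℝ} {x : ι → ℝ} (hA : IsStrictNash A x) :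
    ∃ i, x = Pi.single i 1 := by
  -- otherwise every pure strategy does strictly worse against `x` than `x` itself, and averaging
  -- these inequalities with the weights `x` gives `x ⬝ᵥ A *ᵥ x < x ⬝ᵥ A *ᵥ x`
  by_contra! hne
  have hlt : ∀ h, (A *ᵥ x) h < x ⬝ᵥ A *ᵥ x := fun h => by
    simpa [single_dotProduct] using hA.2 _ (single_mem_stdSimplex ℝ h) (hne h).symm
  obtain ⟨j, -, hj⟩ : ∃ j ∈ Finset.univ, (0 : ℝ) < x j :=
    Finset.exists_lt_of_sum_lt (by simp [hA.1.2])
  have := Finset.sum_lt_sum (fun h _ => mul_le_mul_of_nonneg_left (hlt h).le (hA.1.1 h))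
    ⟨j, Finset.mem_univ j, mul_lt_mul_of_pos_left (hlt j) hj⟩
  rw [← Finset.sum_mul, hA.1.2, one_mul] at this
  exact this.false

theorem IsStrictNash.lt_diag {A : Matrix ι ι ℝ} {i h : ι}
    (hA : IsStrictNash A (Pi.single i 1)) (hh : h ≠ i) : A h i < A i i := by
  simpa [single_dotProduct] using hA.2 _ (single_mem_stdSimplex ℝ h)
    fun heq => by simpa [hh] using congrFun heq h

theorem sum_erase_of_mem_stdSimplex {x : ι → ℝ} (hx : x ∈ stdSimplex ℝ ι) (i : ι) :
    ∑ h ∈ Finset.univ.erase i, x h = 1 - x i := by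
  rw [Finset.sum_erase_eq_sub (Finset.mem_univ i), hx.2]

theorem dist_single_of_mem_stdSimplex {x : ι → ℝ} (hx : x ∈ stdSimplex ℝ ι) (i : ι) :
    dist x (Pi.single i 1) = 1 - x i := by
  have hxi := mem_Icc_of_mem_stdSimplex hx i
  refine le_antisymm ((dist_pi_le_iff (by linarith [hxi.2])).2 fun j => ?_) ?_
  · rcases eq_or_ne j i with rfl | hj
    · rw [Real.dist_eq, Pi.single_eq_same, abs_sub_comm, abs_of_nonneg (by linarith [hxi.2])]
    · rw [Real.dist_eq, Pi.single_eq_of_ne hj, sub_zero, abs_of_nonneg (hx.1 j),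
        ← sum_erase_of_mem_stdSimplex hx]
      exact Finset.single_le_sum (fun h _ => hx.1 h) (Finset.mem_erase.2 ⟨hj, Finset.mem_univ j⟩)
  · have := dist_le_pi_dist x (Pi.single i 1) i
    rwa [Real.dist_eq, Pi.single_eq_same, abs_sub_comm, abs_of_nonneg (by linarith [hxi.2])] at this

theorem exists_mul_dist_le_replicatorField {A : Matrix ι ι ℝ} {i : ι}
    (hgap : ∀ h ≠ i, A h i < A i i) :
    ∃ c > 0, ∃ ε > 0, ∀ x ∈ stdSimplex ℝ ι, dist x (Pi.single i 1) < ε →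
      c * dist x (Pi.single i 1) ≤ replicatorField A x i := by
  obtain ⟨c, hcgap, hc⟩ : ∃ c, (∀ h ≠ i, c < A i i - A h i) ∧ 0 < c := by
    refine ((eventually_all.2 fun h => ?_).and eventually_mem_nhdsWithin).exists (f := 𝓝[>] 0)
    by_cases hh : h = i
    · simp [hh]
    · exact ((eventually_lt_nhds (sub_pos.2 (hgap h hh))).filter_mono nhdsWithin_le_nhds).mono
        fun _ hc _ => hc
  have hnear : ∀ᶠ y in 𝓝 (Pi.single i 1 : ι → ℝ),
      1 / 2 < y i ∧ ∀ h ≠ i, c < (A *ᵥ y) i - (A *ᵥ y) h := by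
    refine (continuousAt_const.eventually_lt (continuous_apply i).continuousAt
      (by norm_num)).and (eventually_all.2 fun h => ?_)
    by_cases hh : h = i
    · simp [hh]
    · refine (continuousAt_const.eventually_lt (by fun_prop) (by simpa using hcgap h hh)).mono
        fun _ hy _ => hy
  obtain ⟨ε, hε, hball⟩ := Metric.eventually_nhds_iff.1 hnear
  refine ⟨c / 2, half_pos hc, ε, hε, fun x hx hdist => ?_⟩
  obtain ⟨hxi, hxgap⟩ := hball hdist
  rw [dist_single_of_mem_stdSimplex hx]
  have hpayoff : (A *ᵥ x) i - x ⬝ᵥ A *ᵥ x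
      = ∑ h ∈ Finset.univ.erase i, x h * ((A *ᵥ x) i - (A *ᵥ x) h) := by
    rw [Finset.sum_erase _ (by rw [sub_self, mul_zero])]
    simp only [mul_sub, Finset.sum_sub_distrib, ← Finset.sum_mul, hx.2, one_mul, dotProduct]
  have hadvantage : c * (1 - x i) ≤ (A *ᵥ x) i - x ⬝ᵥ A *ᵥ x := by
    rw [hpayoff, ← sum_erase_of_mem_stdSimplex hx, Finset.mul_sum]
    exact Finset.sum_le_sum fun h hh => by
      rw [mul_comm]
      exact mul_le_mul_of_nonneg_left (hxgap h (Finset.ne_of_mem_erase hh)).le (hx.1 h)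
  have := (mem_Icc_of_mem_stdSimplex hx i).2
  unfold replicatorField
  nlinarith [mul_nonneg (sub_nonneg.2 hxi.le)
    (mul_nonneg hc.le (sub_nonneg.2 this) |>.trans hadvantage)]

theorem exists_dist_le_mul_exp_of_lt_diag {A : Matrix ι ι ℝ} {i : ι}
    (hgap : ∀ h ≠ i, A h i < A i i) :
    ∃ c > 0, ∃ ε > 0, ∀ x : ℝ → ι → ℝ,
      (∀ t ≥ (0 : ℝ), ∀ h, HasDerivAt (fun s => x s h) (replicatorField A (x t) h) t) →
      (∀ t ≥ (0 : ℝ), x t ∈ stdSimplex ℝ ι) → dist (x 0) (Pi.single i 1) < ε →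
      ∀ t ≥ (0 : ℝ), dist (x t) (Pi.single i 1) ≤ dist (x 0) (Pi.single i 1) * exp (-c * t) := by
  obtain ⟨c, hc, ε, hε, hdrift⟩ := exists_mul_dist_le_replicatorField hgap
  refine ⟨c, hc, ε, hε, fun x hode hΔ h0 t ht => ?_⟩
  have hdist : ∀ t ≥ (0 : ℝ), dist (x t) (Pi.single i 1) = 1 - x t i := fun t ht =>
    dist_single_of_mem_stdSimplex (hΔ t ht) i
  rw [hdist 0 le_rfl] at h0 ⊢
  rw [hdist t ht]
  refine le_mul_exp_neg_mul_of_hasDerivAt hc (fun t ht => (hode t ht i).const_sub 1)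
    (fun s hs hsε => ?_) (sub_nonneg.2 (mem_Icc_of_mem_stdSimplex (hΔ 0 le_rfl) i).2) h0 t ht
  have := hdrift (x s) (hΔ s hs) (by rwa [hdist s hs])
  rw [hdist s hs] at this
  linarith

/-- A strict Nash equilibrium is asymptotically stable for the replicator
dynamics restricted to the simplex: (i) trajectories starting close enough
stay close (Lyapunov stability within the simplex), and (ii) trajectories
starting in some neighborhood of `x*` in the simplex converge to `x*`. -/
theorem strict_nash_asymptotically_stable
    {n : ℕ} (A : Matrix (Fin n) (Fin n) ℝ)
    (xstar : Fin n → ℝ) (hx : xstar ∈ stdSimplex ℝ (Fin n))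
    (hstrict : ∀ y ∈ stdSimplex ℝ (Fin n), y ≠ xstar →
      y ⬝ᵥ A.mulVec xstar < xstar ⬝ᵥ A.mulVec xstar) :
    (∀ U ∈ nhdsWithin xstar (stdSimplex ℝ (Fin n)),
      ∃ V ∈ nhdsWithin xstar (stdSimplex ℝ (Fin n)),
        ∀ x : ℝ → Fin n → ℝ,
          (∀ t ≥ (0 : ℝ), ∀ h : Fin n,
            HasDerivAt (fun s => x s h)
              (x t h * ((A.mulVec (x t)) h - (x t) ⬝ᵥ A.mulVec (x t))) t) →
          (∀ t ≥ (0 : ℝ), x t ∈ stdSimplex ℝ (Fin n)) →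
          x 0 ∈ V → ∀ t ≥ (0 : ℝ), x t ∈ U) ∧
    (∃ W ∈ nhdsWithin xstar (stdSimplex ℝ (Fin n)),
      ∀ x : ℝ → Fin n → ℝ,
        (∀ t ≥ (0 : ℝ), ∀ h : Fin n,
          HasDerivAt (fun s => x s h)
            (x t h * ((A.mulVec (x t)) h - (x t) ⬝ᵥ A.mulVec (x t))) t) →
        (∀ t ≥ (0 : ℝ), x t ∈ stdSimplex ℝ (Fin n)) →
        x 0 ∈ W → Filter.Tendsto x Filter.atTop (nhds xstar)) := by
  have hnash : IsStrictNash A xstar := ⟨hx, hstrict⟩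
  obtain ⟨i, rfl⟩ := hnash.exists_eq_single
  obtain ⟨c, hc, ε, hε, hdecay⟩ := exists_dist_le_mul_exp_of_lt_diag fun h => hnash.lt_diag
  refine ⟨fun U hU => ?_, _ ∩ ball _ ε, inter_mem_nhdsWithin _ (ball_mem_nhds _ hε),
    fun x hode hΔ h0 => ?_⟩
  · obtain ⟨r, hr, hrU⟩ := Metric.mem_nhdsWithin_iff.1 hU
    refine ⟨_ ∩ ball _ (min ε r), inter_mem_nhdsWithin _ (ball_mem_nhds _ (lt_min hε hr)),
      fun x hode hΔ h0 t ht => hrU ⟨?_, hΔ t ht⟩⟩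
    have h0 : dist (x 0) (Pi.single i 1) < min ε r := h0.2
    calc dist (x t) (Pi.single i 1)
        ≤ dist (x 0) (Pi.single i 1) * exp (-c * t) :=
          hdecay x hode hΔ (h0.trans_le (min_le_left _ _)) t ht
      _ ≤ dist (x 0) (Pi.single i 1) :=
          mul_le_of_le_one_right dist_nonneg (exp_le_one_iff.2 (by nlinarith))
      _ < r := h0.trans_le (min_le_right _ _)
  · have hexp : Tendsto (fun t => exp (-c * t)) atTop (𝓝 0) :=
      tendsto_exp_atBot.comp (tendsto_id.const_mul_atTop_of_neg (neg_lt_zero.2 hc))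
    refine tendsto_iff_dist_tendsto_zero.2 (squeeze_zero' (Eventually.of_forall fun _ => dist_nonneg)
      ((eventually_ge_atTop 0).mono (hdecay x hode hΔ h0.2)) ?_)
    simpa using hexp.const_mul (dist (x 0) (Pi.single i 1))
end
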